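/- Let g(β) = ‖y − Xβ‖₂² and L ≥ 2λ_max(XᵀX). If η ∈ H_k(β − (1/L)∇g(β)) (a hard-thresholded gradient step), then g(η) ≤ Q_L(η, β) ≤ Q_L(β, β) = g(β), i.e., the discrete first-order iteration does not increase the objective, provided ‖β‖₀ ≤ k. -/

import Mathlib

open Matrix

/-- restored from older Mathlib (removed since) -/
theorem Matrix.isHermitian_transpose_mul_self {m n : Type*} [Fintype m] (A : Matrix m n ℝ) :
    (Aᵀ * A).IsHermitian := by
  simpa using Matrix.isHermitian_conjTranspose_mul_self A

/-- number of nonzero coordinates, `‖β‖₀` -/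
noncomputable def l0 {p : ℕ} (β : Fin p → ℝ) : ℕ := (Finset.univ.filter fun i => β i ≠ 0).card

/-!
Since every eigenvalue of `XᵀX` is at most `L / 2`, we have `‖X d‖² ≤ (L/2) ‖d‖²`, and the exact
second-order expansion of the quadratic `g` then gives `g η ≤ Q_L(η, β)`. Completing the square,
`Q_L(η, β) - g β = (L/2) (‖η - c‖² - ‖β - c‖²)` with `c = β - ∇g(β) / L`, which is `≤ 0` because
`β` is a competitor in the problem that `η` solves. Finally `L ≥ 0`, as `XᵀX` is positive
semidefinite.
-/

section

variable {m ι : Type*} [Fintype m] [Fintype ι]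

theorem Matrix.IsHermitian.dotProduct_mulVec_le_of_eigenvalues_le [DecidableEq ι]
    {A : Matrix ι ι ℝ} (hA : A.IsHermitian) {μ : ℝ} (hμ : ∀ i, hA.eigenvalues i ≤ μ)
    (v : ι → ℝ) : v ⬝ᵥ A *ᵥ v ≤ μ * (v ⬝ᵥ v) := by
  have hpsd : (algebraMap ℝ _ μ - A).PosSemidef := by
    refine posSemidef_iff_isHermitian_and_spectrum_nonneg.mpr
      ⟨(isHermitian_diagonal _).sub hA, ?_⟩
    rw [← spectrum.singleton_sub_eq, hA.spectrum_eq_image_range]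
    rintro _ ⟨_, rfl, _, ⟨_, ⟨i, rfl⟩, rfl⟩, rfl⟩
    simpa using hμ i
  simpa only [star_trivial, algebraMap_eq_diagonal, Pi.algebraMap_def, Algebra.algebraMap_self,
    Real.ringHom_apply, sub_mulVec, diagonal_const_mulVec, dotProduct_sub, dotProduct_smul,
    smul_eq_mul, sub_nonneg] using hpsd.dotProduct_mulVec_nonneg v

variable (X : Matrix m ι ℝ) (y : m → ℝ)

theorem Matrix.sum_sq_mulVec_le_of_eigenvalues_le [DecidableEq ι] {μ : ℝ}
    (hμ : ∀ i, (isHermitian_transpose_mul_self X).eigenvalues i ≤ μ) (v : ι → ℝ) :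
    ∑ r, (X *ᵥ v) r ^ 2 ≤ μ * ∑ i, v i ^ 2 := by
  have := (isHermitian_transpose_mul_self X).dotProduct_mulVec_le_of_eigenvalues_le hμ v
  rw [← mulVec_mulVec, dotProduct_mulVec, vecMul_transpose] at this
  simpa only [dotProduct, sq] using this

theorem sum_sq_sub_mulVec_eq (β η : ι → ℝ) :
    ∑ r, (y r - (X *ᵥ η) r) ^ 2 = ∑ r, (y r - (X *ᵥ β) r) ^ 2
      + ∑ i, (η i - β i) * (-2 * (Xᵀ *ᵥ (y - X *ᵥ β)) i) + ∑ r, (X *ᵥ (η - β)) r ^ 2 := by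
  have hcross : ∑ i, (η i - β i) * (-2 * (Xᵀ *ᵥ (y - X *ᵥ β)) i)
      = -2 * ∑ r, (X *ᵥ (η - β)) r * (y - X *ᵥ β) r := by
    calc _ = -2 * ((η - β) ⬝ᵥ Xᵀ *ᵥ (y - X *ᵥ β)) := by
          rw [dotProduct, Finset.mul_sum]
          exact Finset.sum_congr rfl fun i _ => by simp only [Pi.sub_apply]; ring
      _ = _ := by rw [dotProduct_mulVec, vecMul_transpose, dotProduct]
  have hpoint : ∀ r, (y r - (X *ᵥ η) r) ^ 2 = (y r - (X *ᵥ β) r) ^ 2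
      + -2 * ((X *ᵥ (η - β)) r * (y - X *ᵥ β) r) + (X *ᵥ (η - β)) r ^ 2 := fun r => by
    simp only [mulVec_sub, Pi.sub_apply]; ring
  rw [Finset.sum_congr rfl fun r _ => hpoint r, Finset.sum_add_distrib, Finset.sum_add_distrib,
    ← Finset.mul_sum, hcross]

theorem sum_sq_sub_mulVec_le [DecidableEq ι] {μ L : ℝ}
    (hμ : ∀ i, (isHermitian_transpose_mul_self X).eigenvalues i ≤ μ) (hμL : μ ≤ L / 2)
    (β η : ι → ℝ) :
    ∑ r, (y r - (X *ᵥ η) r) ^ 2 ≤ ∑ r, (y r - (X *ᵥ β) r) ^ 2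
      + L / 2 * ∑ i, (η i - β i) ^ 2 + ∑ i, (η i - β i) * (-2 * (Xᵀ *ᵥ (y - X *ᵥ β)) i) := by
  have hquad : ∑ r, (X *ᵥ (η - β)) r ^ 2 ≤ μ * ∑ i, (η i - β i) ^ 2 :=
    X.sum_sq_mulVec_le_of_eigenvalues_le hμ (η - β)
  have hnorm : 0 ≤ ∑ i, (η i - β i) ^ 2 := Finset.sum_nonneg fun i _ => sq_nonneg _
  rw [sum_sq_sub_mulVec_eq X y β η]
  nlinarith

theorem mul_sum_sq_add_sum_mul_eq {L : ℝ} (hL : L ≠ 0) (β η G : ι → ℝ) :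
    L / 2 * ∑ i, (η i - β i) ^ 2 + ∑ i, (η i - β i) * G i
      = L / 2 * (∑ i, (η i - (β - (1 / L) • G) i) ^ 2
          - ∑ i, (β i - (β - (1 / L) • G) i) ^ 2) := by
  rw [← Finset.sum_sub_distrib, Finset.mul_sum, Finset.mul_sum, ← Finset.sum_add_distrib]
  refine Finset.sum_congr rfl fun i _ => ?_
  simp only [Pi.sub_apply, Pi.smul_apply, smul_eq_mul]
  field_simp
  ring

theorem mul_sum_sq_add_sum_mul_nonpos {L : ℝ} (hL : 0 ≤ L) {β η G : ι → ℝ}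
    (hmin : ∑ i, (η i - (β - (1 / L) • G) i) ^ 2 ≤ ∑ i, (β i - (β - (1 / L) • G) i) ^ 2) :
    L / 2 * ∑ i, (η i - β i) ^ 2 + ∑ i, (η i - β i) * G i ≤ 0 := by
  rcases hL.eq_or_lt with rfl | hL
  · -- `1 / 0 = 0`, so `hmin` says that `η` is at least as close to `β` as `β` itself
    have hsum : ∑ i, (η i - β i) ^ 2 ≤ 0 := by simpa using hmin
    have hsq := (Finset.sum_eq_zero_iff_of_nonneg fun i _ => sq_nonneg (η i - β i)).1
      (hsum.antisymm (Finset.sum_nonneg fun i _ => sq_nonneg _))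
    have hηβ : ∀ i, η i - β i = 0 := fun i => pow_eq_zero_iff two_ne_zero |>.1 (hsq i (by simp))
    simp [hηβ]
  · rw [mul_sum_sq_add_sum_mul_eq hL.ne']
    exact mul_nonpos_of_nonneg_of_nonpos (by positivity) (sub_nonpos.2 hmin)

end

theorem dfo_step_decreases_general {n p k : ℕ} (hp : 0 < p)
    (X : Matrix (Fin n) (Fin p) ℝ) (y : Fin n → ℝ)
    (g : (Fin p → ℝ) → ℝ) (hg : g = fun β => ∑ r, (y r - X.mulVec β r) ^ 2)
    (grad : (Fin p → ℝ) → (Fin p → ℝ))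
    (hgrad : ∀ β, grad β = fun i => -2 * Xᵀ.mulVec (y - X.mulVec β) i)
    (lam : ℝ)
    (hlam : lam = Finset.univ.sup' ⟨⟨0, hp⟩, Finset.mem_univ _⟩
        (Matrix.isHermitian_transpose_mul_self X).eigenvalues)
    (L : ℝ) (hL : 2 * lam ≤ L)
    (Q : (Fin p → ℝ) → (Fin p → ℝ) → ℝ)
    (hQ : Q = fun η β => g β + L / 2 * ∑ i, (η i - β i) ^ 2 + ∑ i, (η i - β i) * grad β i)
    (β : Fin p → ℝ) (hβ : l0 β ≤ k)
    (c : Fin p → ℝ) (hc : c = β - (1 / L) • grad β)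
    (η : Fin p → ℝ)
    (hηmin : ∀ η' : Fin p → ℝ, l0 η' ≤ k →
      ∑ i, (η i - c i) ^ 2 ≤ ∑ i, (η' i - c i) ^ 2) :
    g η ≤ Q η β ∧ Q η β ≤ Q β β ∧ Q β β = g β := by
  have hμ : ∀ i, (isHermitian_transpose_mul_self X).eigenvalues i ≤ lam :=
    fun i => hlam ▸ Finset.le_sup' _ (Finset.mem_univ i)
  have hXX : (Xᵀ * X).PosSemidef := by simpa using posSemidef_conjTranspose_mul_self X
  have hlam_nonneg : 0 ≤ lam := (hXX.eigenvalues_nonneg ⟨0, hp⟩).trans (hμ _)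
  have hsurrogate := mul_sum_sq_add_sum_mul_nonpos (by linarith) (hc ▸ hηmin β hβ)
  subst hQ hg
  refine ⟨?_, by simpa [add_assoc] using hsurrogate, by simp⟩
  simpa only [hgrad] using sum_sq_sub_mulVec_le X y hμ (by linarith) β η

/-- One step of the discrete first-order method does not increase the least squares
objective: if `‖β‖₀ ≤ k`, `L ≥ 2 λ_max(XᵀX)` and `η` is a hard-thresholded gradient step,
i.e. a minimizer of `‖· - (β - (1/L)∇g(β))‖₂²` over the sparsity constraint, then
`g η ≤ Q_L(η, β) ≤ Q_L(β, β) = g β`. -/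
theorem dfo_step_decreases {n p k : ℕ} (hp : 0 < p)
    (X : Matrix (Fin n) (Fin p) ℝ) (y : Fin n → ℝ)
    (g : (Fin p → ℝ) → ℝ) (hg : g = fun β => ∑ r, (y r - X.mulVec β r) ^ 2)
    (grad : (Fin p → ℝ) → (Fin p → ℝ))
    (hgrad : ∀ β, grad β = fun i => -2 * Xᵀ.mulVec (y - X.mulVec β) i)
    (lam : ℝ)
    (hlam : lam = Finset.univ.sup' ⟨⟨0, hp⟩, Finset.mem_univ _⟩
        (Matrix.isHermitian_transpose_mul_self X).eigenvalues)
    (L : ℝ) (hL : 2 * lam ≤ L)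
    (Q : (Fin p → ℝ) → (Fin p → ℝ) → ℝ)
    (hQ : Q = fun η β => g β + L / 2 * ∑ i, (η i - β i) ^ 2 + ∑ i, (η i - β i) * grad β i)
    (β : Fin p → ℝ) (hβ : l0 β ≤ k)
    (c : Fin p → ℝ) (hc : c = β - (1 / L) • grad β)
    (η : Fin p → ℝ) (hηk : l0 η ≤ k)
    (hηmin : ∀ η' : Fin p → ℝ, l0 η' ≤ k →
      ∑ i, (η i - c i) ^ 2 ≤ ∑ i, (η' i - c i) ^ 2) :
    g η ≤ Q η β ∧ Q η β ≤ Q β β ∧ Q β β = g β :=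
  dfo_step_decreases_general hp X y g hg grad hgrad lam hlam L hL Q hQ β hβ c hc η hηmin
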